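/- For the Type (B.1) metric, the Ricci operator is (3q/(2a²))·Id plus a nilpotent part with the only non-zero off-diagonal entries Ric⁴₁ = (15/a³)x₂(bq−c²) and Ric⁴₂ = (15/(2a³))(bq−c²). Consequently the metric is Einstein if and only if c² − bq = 0, in which case the scalar curvature is τ = 6q/a². -/

import Mathlib

open Real Matrix

noncomputable section

abbrev Pt : Type := Fin 4 → ℝ
abbrev Mtx : Type := Matrix (Fin 4) (Fin 4) ℝ

/-- Partial derivative in the `i`-th coordinate direction. -/
def pd (i : Fin 4) (f : Pt → ℝ) (x : Pt) : ℝ :=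
  fderiv ℝ f x (Pi.single i 1)

/-- Inverse of the metric matrix. -/
def ginv (g : Pt → Mtx) (x : Pt) : Mtx := (g x)⁻¹

/-- Christoffel symbols Γ^k_{ij} of the Levi-Civita connection. -/
def chris (g : Pt → Mtx) (x : Pt) (k i j : Fin 4) : ℝ :=
  (1/2) * ∑ l, ginv g x k l *
    (pd i (fun y => g y l j) x + pd j (fun y => g y l i) x - pd l (fun y => g y i j) x)

/-- Component `l` of the curvature operator R(∂_i,∂_j)∂_k (convention
R(X,Y) = ∇_{[X,Y]} - [∇_X,∇_Y]). -/
def Rup (g : Pt → Mtx) (x : Pt) (l i j k : Fin 4) : ℝ :=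
  pd j (fun y => chris g y l i k) x - pd i (fun y => chris g y l j k) x
    + ∑ m, chris g x m i k * chris g x l j m
    - ∑ m, chris g x m j k * chris g x l i m

/-- The (0,4) curvature tensor R(∂_i,∂_j,∂_k,∂_l) = g(R(∂_i,∂_j)∂_k, ∂_l). -/
def Riem (g : Pt → Mtx) (x : Pt) (i j k l : Fin 4) : ℝ :=
  ∑ m, g x l m * Rup g x m i j k

/-- Ricci tensor ρ(X,Y) = trace (Z ↦ R(X,Z)Y). -/
def ricci (g : Pt → Mtx) (x : Pt) (i j : Fin 4) : ℝ :=
  ∑ k, Rup g x k i k j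

/-- Scalar curvature. -/
def scal (g : Pt → Mtx) (x : Pt) : ℝ :=
  ∑ i, ∑ j, ginv g x i j * ricci g x i j

/-- The Ricci operator g^{-1}ρ. -/
def RicOp (g : Pt → Mtx) (x : Pt) : Mtx :=
  Matrix.of fun i j => ∑ k, ginv g x i k * ricci g x k j

/-- Schouten tensor 𝔖 = ρ - (τ/6) g (dimension 4). -/
def schouten (g : Pt → Mtx) (x : Pt) (i j : Fin 4) : ℝ :=
  ricci g x i j - scal g x / 6 * g x i j

/-- Covariant derivative of the Schouten tensor, (∇_i 𝔖)_{jk}. -/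
def covSchouten (g : Pt → Mtx) (x : Pt) (i j k : Fin 4) : ℝ :=
  pd i (fun y => schouten g y j k) x
    - ∑ m, chris g x m i j * schouten g x m k
    - ∑ m, chris g x m i k * schouten g x j m

/-- Cotton tensor 𝔠_{ijk} = (∇_i 𝔖)_{jk} - (∇_j 𝔖)_{ik}. -/
def cotton (g : Pt → Mtx) (x : Pt) (i j k : Fin 4) : ℝ :=
  covSchouten g x i j k - covSchouten g x j i k

/-- Weyl conformal curvature tensor (dimension 4). -/
def weyl (g : Pt → Mtx) (x : Pt) (i j k l : Fin 4) : ℝ :=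
  Riem g x i j k l
    - (1/2) * (g x i k * ricci g x j l - g x i l * ricci g x j k
        + g x j l * ricci g x i k - g x j k * ricci g x i l)
    + scal g x / 6 * (g x i k * g x j l - g x i l * g x j k)

/-- Covariant derivative of the Cotton tensor, (∇_α 𝔠)_{kij}. -/
def covCotton (g : Pt → Mtx) (x : Pt) (α k i j : Fin 4) : ℝ :=
  pd α (fun y => cotton g y k i j) x
    - ∑ m, chris g x m α k * cotton g x m i j
    - ∑ m, chris g x m α i * cotton g x k m j
    - ∑ m, chris g x m α j * cotton g x k i m

/-- Bach tensor B_{ij} = (1/2){ g^{kα}(∇_α 𝔠)_{kij} + ρ^{kℓ} W_{ikjℓ} }. -/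
def bach (g : Pt → Mtx) (x : Pt) (i j : Fin 4) : ℝ :=
  (1/2) * ((∑ k, ∑ α, ginv g x k α * covCotton g x α k i j)
    + ∑ k, ∑ l, (∑ p, ∑ r, ginv g x k p * ginv g x l r * ricci g x p r) * weyl g x i k j l)

/-- Hessian of a function with respect to the Levi-Civita connection. -/
def hess (g : Pt → Mtx) (φ : Pt → ℝ) (x : Pt) (i j : Fin 4) : ℝ :=
  pd i (fun y => pd j φ y) x - ∑ m, chris g x m i j * pd m φ x

/-- Laplacian (metric trace of the Hessian). -/
def lap (g : Pt → Mtx) (φ : Pt → ℝ) (x : Pt) : ℝ :=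
  ∑ i, ∑ j, ginv g x i j * hess g φ x i j

/-- The conformal metric ḡ = φ^{-2} g. -/
def conf (φ : Pt → ℝ) (g : Pt → Mtx) : Pt → Mtx :=
  fun y => ((φ y)^2)⁻¹ • g y

/-- Einstein at a point: ρ = (τ/4) g. -/
def IsEinsteinAt (g : Pt → Mtx) (x : Pt) : Prop :=
  ∀ i j, ricci g x i j = scal g x / 4 * g x i j

/-- The conformally Einstein equation 2 Hes_φ + φ ρ = (1/4)(2Δφ + φτ) g. -/
def ConfEinsteinEq (g : Pt → Mtx) (φ : Pt → ℝ) : Prop :=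
  ∀ (x : Pt) (i j : Fin 4),
    2 * hess g φ x i j + φ x * ricci g x i j
      = (1/4) * (2 * lap g φ x + φ x * scal g x) * g x i j

/-- Jacobi operator J(v) = R(·,v)v as a matrix. -/
def jacobi (g : Pt → Mtx) (x : Pt) (v : Fin 4 → ℝ) : Mtx :=
  Matrix.of fun l i => ∑ j, ∑ k, v j * v k * Rup g x l i j k

/-- Type (A.1) metric. Coordinates: `x 0 = x₁, …, x 3 = x₄`. -/
def gA1 (a b c q : ℝ) : Pt → Mtx := fun x =>
  !![4*b*(x 1)^2 + a, 2*b*(x 1), -(4*a*(x 1)*(x 3) - 4*c*(x 1) + a)/2, 2*a*(x 1);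
     2*b*(x 1), b, -(a*(x 3) - c), a;
     -(4*a*(x 1)*(x 3) - 4*c*(x 1) + a)/2, -(a*(x 3) - c), q, 0;
     2*a*(x 1), a, 0, 0]

/-- Type (A.2) metric. -/
def gA2 (a b c q α : ℝ) : Pt → Mtx := fun x =>
  !![0, 0, -a * Real.exp (2*α*(x 3)), 0;
     0, a * Real.exp (2*α*(x 3)), 0, 0;
     -a * Real.exp (2*α*(x 3)), 0, b * Real.exp (2*(α-1)*(x 3)), c * Real.exp ((α-1)*(x 3));
     0, 0, c * Real.exp ((α-1)*(x 3)), q]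

/-- Type (A.3) metric `g₊`. -/
def gA3p (a b c q : ℝ) : Pt → Mtx := fun x =>
  !![0, 0, 0, a * Real.exp (2*(x 2));
     0, a * Real.exp (2*(x 2)) * Real.cos (x 3)^2, 0, 0;
     0, 0, b, c;
     a * Real.exp (2*(x 2)), 0, c, q]

/-- Type (A.3) metric `g₋`. -/
def gA3m (a b c q : ℝ) : Pt → Mtx := fun x =>
  !![0, 0, 0, a * Real.exp (2*(x 2));
     0, a * Real.exp (2*(x 2)) * Real.cosh (x 3)^2, 0, 0;
     0, 0, b, c;
     a * Real.exp (2*(x 2)), 0, c, q]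

/-- Type (A.4) metric. -/
def gA4 (a b : ℝ) : Pt → Mtx := fun x =>
  !![a/2*(x 3)^2 + 4*b*(x 1)^2 + a, 2*b*(x 1), a*(x 1)*(4 + (x 3)^2)/2, a*(1 + 2*(x 1)*(x 2))*(x 3)/2;
     2*b*(x 1), b, a*(4 + (x 3)^2)/4, a*(x 2)*(x 3)/2;
     a*(x 1)*(4 + (x 3)^2)/2, a*(4 + (x 3)^2)/4, 0, 0;
     a*(1 + 2*(x 1)*(x 2))*(x 3)/2, a*(x 2)*(x 3)/2, 0, a/2]

/-- Type (A.5) metric. -/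
def gA5 (a : ℝ) : Pt → Mtx := fun x =>
  !![0, -a*(x 3)/(8*(x 1)), 0, a/8;
     -a*(x 3)/(8*(x 1)), a*(2 + 2*(x 0)*(x 3) + (x 2)^2)/(8*(x 1)^2), -a*(x 2)/(8*(x 1)), -a*(x 0)/(8*(x 1));
     0, -a*(x 2)/(8*(x 1)), a/8, 0;
     a/8, -a*(x 0)/(8*(x 1)), 0, 0]

/-- Type (B.1) metric. -/
def gB1 (a b c q : ℝ) : Pt → Mtx := fun x =>
  !![q*((x 2)^2 + 4*(x 1)*(x 2)*(x 3) + 4*(x 1)^2*(x 3)^2) + 4*c*(x 1)*(x 2) + 8*c*(x 1)^2*(x 3) + 2*a*(x 2) + 4*b*(x 1)^2,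
       q*((x 2)*(x 3) + 2*(x 1)*(x 3)^2) + 4*c*(x 1)*(x 3) + c*(x 2) + 2*b*(x 1),
       q*((x 2) + 2*(x 1)*(x 3)) + 2*c*(x 1) + a, 2*a*(x 1);
     q*((x 2)*(x 3) + 2*(x 1)*(x 3)^2) + 4*c*(x 1)*(x 3) + c*(x 2) + 2*b*(x 1),
       q*(x 3)^2 + 2*c*(x 3) + b, q*(x 3) + c, a;
     q*((x 2) + 2*(x 1)*(x 3)) + 2*c*(x 1) + a, q*(x 3) + c, q, 0;
     2*a*(x 1), a, 0, 0]

/-- Type (B.3) metric. -/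
def gB3 (a b : ℝ) : Pt → Mtx := fun x =>
  !![0, -a * Real.exp (-(x 1)) * (x 2), a * Real.exp (-(x 1)), 0;
     -a * Real.exp (-(x 1)) * (x 2), 2*(2*b*(x 2)^2 - a*(x 3)), -2*b*(x 2), a;
     a * Real.exp (-(x 1)), -2*b*(x 2), b, 0;
     0, a, 0, 0]

/-!
The metric coefficients are polynomials in `x` and `g⁻¹` is a polynomial matrix divided by `a²`,
so the Christoffel symbols and the Ricci tensor can be computed in closed form. The result is
`ρ = (3q/2a²) g + (15(bq - c²)/2a²) η ⊗ η` with `η = 2x₂ dx₁ + dx₂` (the vector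
`![2 * x 1, 1, 0, 0]`). Since `g(∂₄, ·) = a η`, we get `g⁻¹η = a⁻¹ ∂₄`, hence
`g⁻¹ρ = (3q/2a²) Id + (15(bq - c²)/2a³) ∂₄ ⊗ η`, whose second summand is nilpotent. Taking the
trace gives `τ = 6q/a²`, and `ρ = (τ/4) g` holds exactly when that nilpotent part vanishes,
i.e. when `c² = bq`.
-/

section PartialDerivative
variable {f f' : Pt → ℝ} {x : Pt}

theorem pd_const (i : Fin 4) (c : ℝ) : pd i (fun _ => c) x = 0 := by
  simp [pd]

theorem pd_coord (i j : Fin 4) : pd i (fun y => y j) x = if i = j then 1 else 0 := by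
  rw [pd, fderiv_apply differentiableAt_fun_id]
  simp [Pi.single_apply, eq_comm]

theorem pd_add (i : Fin 4) (hf : DifferentiableAt ℝ f x) (hf' : DifferentiableAt ℝ f' x) :
    pd i (fun y => f y + f' y) x = pd i f x + pd i f' x := by
  simp [pd, fderiv_fun_add hf hf']

theorem pd_sub (i : Fin 4) (hf : DifferentiableAt ℝ f x) (hf' : DifferentiableAt ℝ f' x) :
    pd i (fun y => f y - f' y) x = pd i f x - pd i f' x := by
  simp [pd, fderiv_fun_sub hf hf']

theorem pd_neg (i : Fin 4) : pd i (fun y => -f y) x = -pd i f x := by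
  simp [pd]

theorem pd_mul (i : Fin 4) (hf : DifferentiableAt ℝ f x) (hf' : DifferentiableAt ℝ f' x) :
    pd i (fun y => f y * f' y) x = pd i f x * f' x + f x * pd i f' x := by
  simp only [pd, fderiv_fun_mul hf hf', _root_.add_apply, _root_.smul_apply, smul_eq_mul]
  ring

theorem pd_div_const (i : Fin 4) (c : ℝ) (hf : DifferentiableAt ℝ f x) :
    pd i (fun y => f y / c) x = pd i f x / c := by
  simp only [pd, div_eq_mul_inv, fderiv_mul_const hf, _root_.smul_apply, smul_eq_mul]
  ring

theorem pd_pow (i : Fin 4) (n : ℕ) (hf : DifferentiableAt ℝ f x) :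
    pd i (fun y => f y ^ n) x = n * f x ^ (n - 1) * pd i f x := by
  simp [pd, fderiv_fun_pow n hf]

end PartialDerivative

section RicciOperator
variable {g : Pt → Mtx} {x : Pt}

theorem RicOp_eq_inv_mul : RicOp g x = (g x)⁻¹ * Matrix.of (ricci g x) := by
  ext i j
  simp [RicOp, ginv, mul_apply]

theorem isEinsteinAt_iff_RicOp_eq_smul_one (hg : IsUnit (g x).det) :
    IsEinsteinAt g x ↔ RicOp g x = (scal g x / 4) • 1 := by
  have hricci : Matrix.of (ricci g x) = g x * RicOp g x := by
    rw [RicOp_eq_inv_mul, mul_nonsing_inv_cancel_left _ _ hg]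
  rw [RicOp_eq_inv_mul]
  constructor
  · intro hE
    have hρ : Matrix.of (ricci g x) = (scal g x / 4) • g x := by ext i j; exact hE i j
    rw [hρ, Matrix.mul_smul, nonsing_inv_mul _ hg]
  · intro hR i j
    rw [← of_apply (ricci g x) i j, hricci, RicOp_eq_inv_mul, hR, Matrix.mul_smul, mul_one,
      Matrix.smul_apply, smul_eq_mul]

theorem scal_eq_trace_RicOp (hg : (g x).IsSymm) : scal g x = (RicOp g x).trace := by
  have hinv : (ginv g x).IsSymm := hg.inv
  simp only [scal, RicOp, Matrix.trace, diag_apply, of_apply]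
  rw [Finset.sum_comm]
  refine Finset.sum_congr rfl fun i _ => Finset.sum_congr rfl fun j _ => ?_
  rw [hinv.apply]

end RicciOperator

section TypeB1
variable {a b c q : ℝ}

def gB1Inv (a b c q : ℝ) (x : Pt) : Mtx :=
  !![-q/a^2, (2*(x 1)*q)/a^2, (a + (x 2)*q)/a^2, (-c - (x 3)*q)/a^2;
    (2*(x 1)*q)/a^2,
    (-4*(x 1)^2*q)/a^2,
    (-2*(x 1)*a - 2*(x 1)*(x 2)*q)/a^2,
    (a + 2*(x 1)*c + 2*(x 1)*(x 3)*q)/a^2;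
    (a + (x 2)*q)/a^2,
    (-2*(x 1)*a - 2*(x 1)*(x 2)*q)/a^2,
    (-2*(x 2)*a - (x 2)^2*q)/a^2,
    ((x 2)*c + (x 2)*(x 3)*q)/a^2;
    (-c - (x 3)*q)/a^2,
    (a + 2*(x 1)*c + 2*(x 1)*(x 3)*q)/a^2,
    ((x 2)*c + (x 2)*(x 3)*q)/a^2,
    (-b - 2*(x 3)*c - (x 3)^2*q)/a^2]

theorem gB1_mul_gB1Inv (h : a ≠ 0) (x : Pt) : gB1 a b c q x * gB1Inv a b c q x = 1 := by
  ext i j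
  fin_cases i <;> fin_cases j <;>
  · simp only [gB1, gB1Inv, mul_apply, of_apply, cons_val, Fin.sum_univ_four, one_apply,
      Fin.isValue, Fin.reduceFinMk, Fin.reduceEq, reduceIte]
    field_simp
    ring

theorem ginv_gB1 (h : a ≠ 0) (x : Pt) : ginv (gB1 a b c q) x = gB1Inv a b c q x :=
  inv_eq_right_inv (gB1_mul_gB1Inv h x)

theorem gB1_isSymm (x : Pt) : (gB1 a b c q x).IsSymm := by
  ext i j
  fin_cases i <;> fin_cases j <;> rfl

theorem gB1_mulVec_single (x : Pt) :
    gB1 a b c q x *ᵥ Pi.single 3 1 = a • ![2 * x 1, 1, 0, 0] := by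
  ext i
  fin_cases i <;>
    simp only [gB1, mulVec, dotProduct, Fin.sum_univ_four, of_apply, cons_val, Pi.single_apply,
      Pi.smul_apply, smul_eq_mul, Fin.isValue, Fin.reduceFinMk, Fin.reduceEq, reduceIte, mul_zero,
      mul_one, add_zero, zero_add]
  all_goals ring

def gB1Deriv (a b c q : ℝ) (x : Pt) : Fin 4 → Mtx :=
  ![0,
    !![q*(4*(x 2)*(x 3) + 8*(x 1)*(x 3)^2) + 4*c*(x 2) + 16*c*(x 1)*(x 3) + 8*b*(x 1),
         2*q*(x 3)^2 + 4*c*(x 3) + 2*b, 2*q*(x 3) + 2*c, 2*a;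
       2*q*(x 3)^2 + 4*c*(x 3) + 2*b, 0, 0, 0;
       2*q*(x 3) + 2*c, 0, 0, 0;
       2*a, 0, 0, 0],
    !![q*(2*(x 2) + 4*(x 1)*(x 3)) + 4*c*(x 1) + 2*a, q*(x 3) + c, q, 0;
       q*(x 3) + c, 0, 0, 0;
       q, 0, 0, 0;
       0, 0, 0, 0],
    !![q*(4*(x 1)*(x 2) + 8*(x 1)^2*(x 3)) + 8*c*(x 1)^2, q*((x 2) + 4*(x 1)*(x 3)) + 4*c*(x 1),
         2*q*(x 1), 0;
       q*((x 2) + 4*(x 1)*(x 3)) + 4*c*(x 1), 2*q*(x 3) + 2*c, q, 0;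
       2*q*(x 1), q, 0, 0;
       0, 0, 0, 0]]

theorem pd_gB1 (x : Pt) (i l j : Fin 4) :
    pd i (fun y => gB1 a b c q y l j) x = gB1Deriv a b c q x i l j := by
  fin_cases i <;> fin_cases l <;> fin_cases j <;>
    simp (disch := fun_prop) only [gB1, gB1Deriv, of_apply, cons_val, Fin.reduceFinMk, Fin.isValue,
      Matrix.zero_apply, pd_add, pd_mul, pd_pow, pd_const, pd_coord, Fin.reduceEq, reduceIte] <;>
    ring

def gB1Christoffel₀ (a b c q : ℝ) (x : Pt) : Mtx :=
  !![(-a^2 - 2*(x 2)*a*q - (x 2)^2*q^2 - 2*(x 1)*a*c - 2*(x 1)*(x 3)*a*q - 4*(x 1)*(x 2)*c*q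
      - 4*(x 1)*(x 2)*(x 3)*q^2 + 4*(x 1)^2*c^2 - 8*(x 1)^2*b*q - 8*(x 1)^2*(x 3)*c*q
      - 4*(x 1)^2*(x 3)^2*q^2)/a^2,
    (-(1/2)*a*c - (1/2)*(x 3)*a*q - (x 2)*c*q - (x 2)*(x 3)*q^2 + 2*(x 1)*c^2 - 4*(x 1)*b*q
      - 4*(x 1)*(x 3)*c*q - 2*(x 1)*(x 3)^2*q^2)/a^2,
    (-a*q - (x 2)*q^2 - 2*(x 1)*c*q - 2*(x 1)*(x 3)*q^2)/a^2,
    (-(x 1)*q)/a;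
    (-(1/2)*a*c - (1/2)*(x 3)*a*q - (x 2)*c*q - (x 2)*(x 3)*q^2 + 2*(x 1)*c^2 - 4*(x 1)*b*q
      - 4*(x 1)*(x 3)*c*q - 2*(x 1)*(x 3)^2*q^2)/a^2,
    (c^2 - 2*b*q - 2*(x 3)*c*q - (x 3)^2*q^2)/a^2,
    (-c*q - (x 3)*q^2)/a^2,
    -q/(2*a);
    (-a*q - (x 2)*q^2 - 2*(x 1)*c*q - 2*(x 1)*(x 3)*q^2)/a^2, (-c*q - (x 3)*q^2)/a^2, -q^2/a^2, 0;
    (-(x 1)*q)/a, -q/(2*a), 0, 0]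

def gB1Christoffel₁ (a b c q : ℝ) (x : Pt) : Mtx :=
  !![(2*(x 1)*a^2 + 2*(x 1)*(x 2)*a*q + 2*(x 1)*(x 2)^2*q^2 + 8*(x 1)^2*(x 2)*c*q
      + 8*(x 1)^2*(x 2)*(x 3)*q^2 - 8*(x 1)^3*c^2 + 16*(x 1)^3*b*q + 16*(x 1)^3*(x 3)*c*q
      + 8*(x 1)^3*(x 3)^2*q^2)/a^2,
    (a^2 - (1/2)*(x 2)*a*q - (x 1)*a*c - (x 1)*(x 3)*a*q + 2*(x 1)*(x 2)*c*q
      + 2*(x 1)*(x 2)*(x 3)*q^2 - 4*(x 1)^2*c^2 + 8*(x 1)^2*b*q + 8*(x 1)^2*(x 3)*c*q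
      + 4*(x 1)^2*(x 3)^2*q^2)/a^2,
    ((x 1)*a*q + 2*(x 1)*(x 2)*q^2 + 4*(x 1)^2*c*q + 4*(x 1)^2*(x 3)*q^2)/a^2,
    (2*(x 1)^2*q)/a;
    (a^2 - (1/2)*(x 2)*a*q - (x 1)*a*c - (x 1)*(x 3)*a*q + 2*(x 1)*(x 2)*c*q
      + 2*(x 1)*(x 2)*(x 3)*q^2 - 4*(x 1)^2*c^2 + 8*(x 1)^2*b*q + 8*(x 1)^2*(x 3)*c*q
      + 4*(x 1)^2*(x 3)^2*q^2)/a^2,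
    (-a*c - (x 3)*a*q - 2*(x 1)*c^2 + 4*(x 1)*b*q + 4*(x 1)*(x 3)*c*q + 2*(x 1)*(x 3)^2*q^2)/a^2,
    (-(1/2)*a*q + 2*(x 1)*c*q + 2*(x 1)*(x 3)*q^2)/a^2,
    ((x 1)*q)/a;
    ((x 1)*a*q + 2*(x 1)*(x 2)*q^2 + 4*(x 1)^2*c*q + 4*(x 1)^2*(x 3)*q^2)/a^2,
    (-(1/2)*a*q + 2*(x 1)*c*q + 2*(x 1)*(x 3)*q^2)/a^2,
    (2*(x 1)*q^2)/a^2,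
    0;
    (2*(x 1)^2*q)/a, ((x 1)*q)/a, 0, 0]

def gB1Christoffel₂ (a b c q : ℝ) (x : Pt) : Mtx :=
  !![(2*(x 2)*a^2 + 3*(x 2)^2*a*q + (x 2)^3*q^2 + 8*(x 1)*(x 2)*a*c + 8*(x 1)*(x 2)*(x 3)*a*q
      + 4*(x 1)*(x 2)^2*c*q + 4*(x 1)*(x 2)^2*(x 3)*q^2 + 8*(x 1)^2*a*b + 16*(x 1)^2*(x 3)*a*c
      + 8*(x 1)^2*(x 3)^2*a*q - 4*(x 1)^2*(x 2)*c^2 + 8*(x 1)^2*(x 2)*b*q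
      + 8*(x 1)^2*(x 2)*(x 3)*c*q + 4*(x 1)^2*(x 2)*(x 3)^2*q^2)/a^2,
    (2*(x 2)*a*c + 2*(x 2)*(x 3)*a*q + (x 2)^2*c*q + (x 2)^2*(x 3)*q^2 + 4*(x 1)*a*b
      + 8*(x 1)*(x 3)*a*c + 4*(x 1)*(x 3)^2*a*q - 2*(x 1)*(x 2)*c^2 + 4*(x 1)*(x 2)*b*q
      + 4*(x 1)*(x 2)*(x 3)*c*q + 2*(x 1)*(x 2)*(x 3)^2*q^2)/a^2,
    (a^2 + 2*(x 2)*a*q + (x 2)^2*q^2 + 3*(x 1)*a*c + 3*(x 1)*(x 3)*a*q + 2*(x 1)*(x 2)*c*q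
      + 2*(x 1)*(x 2)*(x 3)*q^2)/a^2,
    (2*(x 1)*a + (x 1)*(x 2)*q)/a;
    (2*(x 2)*a*c + 2*(x 2)*(x 3)*a*q + (x 2)^2*c*q + (x 2)^2*(x 3)*q^2 + 4*(x 1)*a*b
      + 8*(x 1)*(x 3)*a*c + 4*(x 1)*(x 3)^2*a*q - 2*(x 1)*(x 2)*c^2 + 4*(x 1)*(x 2)*b*q
      + 4*(x 1)*(x 2)*(x 3)*c*q + 2*(x 1)*(x 2)*(x 3)^2*q^2)/a^2,
    (2*a*b + 4*(x 3)*a*c + 2*(x 3)^2*a*q - (x 2)*c^2 + 2*(x 2)*b*q + 2*(x 2)*(x 3)*c*q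
      + (x 2)*(x 3)^2*q^2)/a^2,
    ((3/2)*a*c + (3/2)*(x 3)*a*q + (x 2)*c*q + (x 2)*(x 3)*q^2)/a^2,
    (a + (1/2)*(x 2)*q)/a;
    (a^2 + 2*(x 2)*a*q + (x 2)^2*q^2 + 3*(x 1)*a*c + 3*(x 1)*(x 3)*a*q + 2*(x 1)*(x 2)*c*q
      + 2*(x 1)*(x 2)*(x 3)*q^2)/a^2,
    ((3/2)*a*c + (3/2)*(x 3)*a*q + (x 2)*c*q + (x 2)*(x 3)*q^2)/a^2,
    (a*q + (x 2)*q^2)/a^2,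
    0;
    (2*(x 1)*a + (x 1)*(x 2)*q)/a, (a + (1/2)*(x 2)*q)/a, 0, 0]

def gB1Christoffel₃ (a b c q : ℝ) (x : Pt) : Mtx :=
  !![(-3*(x 2)*a*c - 3*(x 2)*(x 3)*a*q - (x 2)^2*c*q - (x 2)^2*(x 3)*q^2 - 4*(x 1)*a*b
      - 8*(x 1)*(x 3)*a*c - 4*(x 1)*(x 3)^2*a*q - 6*(x 1)*(x 2)*c^2 + 2*(x 1)*(x 2)*b*q
      - 8*(x 1)*(x 2)*(x 3)*c*q - 4*(x 1)*(x 2)*(x 3)^2*q^2 - 4*(x 1)^2*b*c - 8*(x 1)^2*(x 3)*c^2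
      - 4*(x 1)^2*(x 3)*b*q - 12*(x 1)^2*(x 3)^2*c*q - 4*(x 1)^2*(x 3)^3*q^2)/a^2,
    (-a*b - 2*(x 3)*a*c - (x 3)^2*a*q - (3/2)*(x 2)*c^2 + (1/2)*(x 2)*b*q - 2*(x 2)*(x 3)*c*q
      - (x 2)*(x 3)^2*q^2 - 2*(x 1)*b*c - 4*(x 1)*(x 3)*c^2 - 2*(x 1)*(x 3)*b*q
      - 6*(x 1)*(x 3)^2*c*q - 2*(x 1)*(x 3)^3*q^2)/a^2,
    (-(3/2)*a*c - (3/2)*(x 3)*a*q - (x 2)*c*q - (x 2)*(x 3)*q^2 - 3*(x 1)*c^2 + (x 1)*b*q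
      - 4*(x 1)*(x 3)*c*q - 2*(x 1)*(x 3)^2*q^2)/a^2,
    (-a + (1/2)*(x 2)*q)/a;
    (-a*b - 2*(x 3)*a*c - (x 3)^2*a*q - (3/2)*(x 2)*c^2 + (1/2)*(x 2)*b*q - 2*(x 2)*(x 3)*c*q
      - (x 2)*(x 3)^2*q^2 - 2*(x 1)*b*c - 4*(x 1)*(x 3)*c^2 - 2*(x 1)*(x 3)*b*q
      - 6*(x 1)*(x 3)^2*c*q - 2*(x 1)*(x 3)^3*q^2)/a^2,
    (-b*c - 2*(x 3)*c^2 - (x 3)*b*q - 3*(x 3)^2*c*q - (x 3)^3*q^2)/a^2,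
    (-(3/2)*c^2 + (1/2)*b*q - 2*(x 3)*c*q - (x 3)^2*q^2)/a^2,
    0;
    (-(3/2)*a*c - (3/2)*(x 3)*a*q - (x 2)*c*q - (x 2)*(x 3)*q^2 - 3*(x 1)*c^2 + (x 1)*b*q
      - 4*(x 1)*(x 3)*c*q - 2*(x 1)*(x 3)^2*q^2)/a^2,
    (-(3/2)*c^2 + (1/2)*b*q - 2*(x 3)*c*q - (x 3)^2*q^2)/a^2,
    (-c*q - (x 3)*q^2)/a^2,
    q/(2*a);
    (-a + (1/2)*(x 2)*q)/a, 0, q/(2*a), 0]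

def gB1Christoffel (a b c q : ℝ) (x : Pt) : Fin 4 → Mtx :=
  ![gB1Christoffel₀ a b c q x, gB1Christoffel₁ a b c q x, gB1Christoffel₂ a b c q x,
    gB1Christoffel₃ a b c q x]

set_option maxHeartbeats 1000000 in
theorem chris_gB1 (h : a ≠ 0) (x : Pt) (k i j : Fin 4) :
    chris (gB1 a b c q) x k i j = gB1Christoffel a b c q x k i j := by
  simp only [chris, Fin.sum_univ_four, ginv_gB1 h, pd_gB1]
  fin_cases k <;> fin_cases i <;> fin_cases j <;>
  · simp only [gB1Inv, gB1Deriv, gB1Christoffel, gB1Christoffel₀, gB1Christoffel₁,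
      gB1Christoffel₂, gB1Christoffel₃, of_apply, cons_val, Fin.reduceFinMk, Fin.isValue,
      Matrix.zero_apply]
    ring_nf <;> field_simp <;> ring

set_option maxHeartbeats 4000000 in
theorem ricci_gB1 (h : a ≠ 0) (x : Pt) :
    Matrix.of (ricci (gB1 a b c q) x) = (3*q/(2*a^2)) • gB1 a b c q x
      + (15*(b*q - c^2)/(2*a^2)) • vecMulVec ![2 * x 1, 1, 0, 0] ![2 * x 1, 1, 0, 0] := by
  ext i j
  simp only [of_apply, ricci, Rup, Fin.sum_univ_four, chris_gB1 h]
  fin_cases i <;> fin_cases j <;>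
  · simp only [gB1Christoffel, gB1Christoffel₀, gB1Christoffel₁, gB1Christoffel₂,
      gB1Christoffel₃, gB1, Matrix.add_apply, Matrix.smul_apply, vecMulVec_apply, smul_eq_mul,
      of_apply, cons_val, Fin.reduceFinMk, Fin.isValue]
    simp (disch := fun_prop) only [pd_add, pd_sub, pd_neg, pd_mul, pd_div_const, pd_pow,
      pd_const, pd_coord, Fin.reduceEq, reduceIte]
    ring_nf <;> field_simp <;> ring

theorem RicOp_gB1 (h : a ≠ 0) (x : Pt) :
    RicOp (gB1 a b c q) x = (3*q/(2*a^2)) • (1 : Mtx)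
      + Matrix.single 3 0 (15/a^3 * (x 1) * (b*q - c^2))
      + Matrix.single 3 1 (15/(2*a^3) * (b*q - c^2)) := by
  have hdet : IsUnit (gB1 a b c q x).det := isUnit_det_of_right_inverse (gB1_mul_gB1Inv h x)
  have hη : (gB1 a b c q x)⁻¹ *ᵥ ![2 * x 1, 1, 0, 0] = a⁻¹ • Pi.single 3 1 := by
    rw [← inv_smul_smul₀ h ![2 * x 1, 1, 0, 0], ← gB1_mulVec_single, mulVec_smul,
      mulVec_mulVec, nonsing_inv_mul _ hdet, one_mulVec]
  rw [RicOp_eq_inv_mul, ricci_gB1 h, Matrix.mul_add, Matrix.mul_smul, Matrix.mul_smul,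
    nonsing_inv_mul _ hdet, mul_vecMulVec, hη, add_assoc]
  congr 1
  ext i j
  fin_cases i <;> fin_cases j <;>
    simp only [Matrix.add_apply, Matrix.smul_apply, vecMulVec_apply, Pi.smul_apply, Pi.single_apply,
      single_apply, cons_val, smul_eq_mul, Fin.isValue, Fin.reduceFinMk, Fin.reduceEq, and_self,
      and_false, false_and, reduceIte, mul_zero, mul_one, zero_mul, add_zero, zero_add]
  all_goals field_simp

theorem scal_gB1 (h : a ≠ 0) (x : Pt) : scal (gB1 a b c q) x = 6*q/a^2 := by
  rw [scal_eq_trace_RicOp (gB1_isSymm x), RicOp_gB1 h]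
  simp only [trace_add, trace_smul, trace_one, Fintype.card_fin, Nat.cast_ofNat, smul_eq_mul,
    ne_eq, Fin.reduceEq, not_false_eq_true, trace_single_eq_of_ne, add_zero]
  ring

theorem isEinsteinAt_gB1_iff (h : a ≠ 0) (x : Pt) :
    IsEinsteinAt (gB1 a b c q) x ↔ c^2 - b*q = 0 := by
  rw [isEinsteinAt_iff_RicOp_eq_smul_one (isUnit_det_of_right_inverse (gB1_mul_gB1Inv h x)),
    RicOp_gB1 h, scal_gB1 h]
  constructor
  · intro hE
    have h31 := congrFun (congrFun hE 3) 1
    simp only [Matrix.add_apply, Matrix.smul_apply, one_apply, single_apply, smul_eq_mul,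
      Fin.isValue, Fin.reduceEq, and_self, and_false, reduceIte, mul_zero, zero_add] at h31
    have hcoeff : 15/(2*a^3) ≠ 0 := by positivity
    linarith [(mul_eq_zero.mp h31).resolve_left hcoeff]
  · intro hc
    rw [show b*q - c^2 = 0 by linarith]
    simp only [mul_zero, single_zero, add_zero]
    congr 1
    ring

end TypeB1

/-- Ricci operator of the Type (B.1) metric; Einstein iff
c² − bq = 0, in which case the scalar curvature is 6q/a². -/
theorem typeB1_ricciOp (a b c q : ℝ) (h : a ≠ 0) :
    (∀ x : Pt, RicOp (gB1 a b c q) x =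
      (3*q/(2*a^2)) • (1 : Mtx)
        + Matrix.single 3 0 (15/a^3 * (x 1) * (b*q - c^2))
        + Matrix.single 3 1 (15/(2*a^3) * (b*q - c^2))) ∧
    ((∀ x : Pt, IsEinsteinAt (gB1 a b c q) x) ↔ c^2 - b*q = 0) ∧
    (c^2 - b*q = 0 → ∀ x : Pt, scal (gB1 a b c q) x = 6*q/a^2) :=
  ⟨RicOp_gB1 h,
    ⟨fun hE => (isEinsteinAt_gB1_iff h 0).mp (hE 0),
      fun hc x => (isEinsteinAt_gB1_iff h x).mpr hc⟩,
    fun _ => scal_gB1 h⟩
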